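/- arXiv:1006.4408 — 3 statements merged into one kernel-verified Lean document; each statement's English description precedes it below -/
import Mathlib

section
/- Fix an integer M ≥ 1 and a real R > 0. If λ > 0 satisfies the first-order condition Σ_{k=0}^{M−1} λ^k/k! = λ^M/(M−1)!, then S(M+1,λ) = ((M+1)/M) · S(M,λ). -/
open Finset Real

/-- Asymptotic throughput of slotted ALOHA with MPR capability `M` at Poisson
attempt rate `λ`: `S(M,λ) = R · λ · ∑_{k=0}^{M−1} (λ^k/k!) e^{−λ}`. -/
noncomputable def S (M : ℕ) (R lam : ℝ) : ℝ :=
  R * lam * ∑ k ∈ Finset.range M, lam ^ k / (Nat.factorial k : ℝ) * Real.exp (-lam)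

/-
At the first-order condition the new term of `S (M + 1)`, namely `R λ e^{-λ} λ^M / M!`, equals
`R λ e^{-λ} (λ^M / (M-1)!) / M = S M / M`, so adding it multiplies `S M` by `(M + 1) / M`.
-/

theorem S_eq_mul_sum (M : ℕ) (R lam : ℝ) :
    S M R lam = R * lam * Real.exp (-lam) * ∑ k ∈ range M, lam ^ k / (k.factorial : ℝ) := by
  rw [S, ← Finset.sum_mul]
  ring

theorem S_succ (M : ℕ) (R lam : ℝ) :
    S (M + 1) R lam = S M R lam + R * lam * Real.exp (-lam) * (lam ^ M / (M.factorial : ℝ)) := by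
  rw [S_eq_mul_sum, S_eq_mul_sum, sum_range_succ]
  ring

theorem pow_div_factorial_eq_div_pred_factorial_div {M : ℕ} (hM : M ≠ 0) (lam : ℝ) :
    lam ^ M / (M.factorial : ℝ) = lam ^ M / ((M - 1).factorial : ℝ) / M := by
  rw [← Nat.mul_factorial_pred hM, Nat.cast_mul, div_div, mul_comm]

theorem stmt2_general (M : ℕ) (hM : 1 ≤ M) (R : ℝ) (lam : ℝ)
    (hfoc : ∑ k ∈ Finset.range M, lam ^ k / (Nat.factorial k : ℝ) =
      lam ^ M / (Nat.factorial (M - 1) : ℝ)) :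
    S (M + 1) R lam = ((M : ℝ) + 1) / (M : ℝ) * S M R lam := by
  have hM0 : M ≠ 0 := Nat.one_le_iff_ne_zero.mp hM
  have hnew : lam ^ M / (M.factorial : ℝ) = (∑ k ∈ range M, lam ^ k / (k.factorial : ℝ)) / M := by
    rw [hfoc, pow_div_factorial_eq_div_pred_factorial_div hM0]
  rw [S_succ, hnew, S_eq_mul_sum]
  field_simp

/-- if `λ > 0` satisfies the first-order condition
`∑_{k=0}^{M−1} λ^k/k! = λ^M/(M−1)!`, then `S(M+1,λ) = ((M+1)/M) · S(M,λ)`. -/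
theorem stmt2 (M : ℕ) (hM : 1 ≤ M) (R : ℝ) (hR : 0 < R) (lam : ℝ) (hpos : 0 < lam)
    (hfoc : ∑ k ∈ Finset.range M, lam ^ k / (Nat.factorial k : ℝ) =
      lam ^ M / (Nat.factorial (M - 1) : ℝ)) :
    S (M + 1) R lam = ((M : ℝ) + 1) / (M : ℝ) * S M R lam :=
  stmt2_general M hM R lam hfoc
end

section
/- (Super-linearity, Theorem 1) For every integer M ≥ 1 and real R > 0, the maximum achievable asymptotic throughput per unit MPR capability is nondecreasing: S*(M+1)/(M+1) ≥ S*(M)/M, where S*(M) = sup_{λ>0} S(M,λ). -/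
open Finset Real

/-- Maximum achievable asymptotic throughput `S*(M) = sup_{λ>0} S(M,λ)`. -/
noncomputable def Sstar (M : ℕ) (R : ℝ) : ℝ :=
  sSup ((fun lam => S M R lam) '' Set.Ioi (0 : ℝ))


/-!
Write `S(M, x) = R x P(N_x < M)` with `N_x ∼ Poisson(x)`. Since `∂ₓ P(N_x < M) = -P(N_x = M - 1)`,
one gets `M S(M+1, x) = (M+1) S(M, x) - x ∂ₓS(M, x)`. As `S(M, ·)` vanishes at `0` and at infinity,
it attains its supremum at some `c > 0`, where its derivative vanishes; hence
`S*(M+1) ≥ S(M+1, c) = (M+1)/M · S*(M)`.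
-/

open Filter Topology Set Nat

/-- `P(N < M)` for `N ∼ Poisson(x)`; by definition `S M R x = R * x * poissonProbLT M x`. -/
noncomputable def poissonProbLT (M : ℕ) (x : ℝ) : ℝ :=
  ∑ k ∈ range M, x ^ k / (k ! : ℝ) * exp (-x)

lemma poissonProbLT_succ (M : ℕ) (x : ℝ) :
    poissonProbLT (M + 1) x = poissonProbLT M x + x ^ M / (M ! : ℝ) * exp (-x) :=
  sum_range_succ _ M

lemma hasDerivAt_poissonProbLT (n : ℕ) (x : ℝ) :
    HasDerivAt (poissonProbLT (n + 1)) (-(x ^ n / (n ! : ℝ) * exp (-x))) x := by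
  have hexp : HasDerivAt (fun y => exp (-y)) (-exp (-x)) x := by
    simpa using (hasDerivAt_neg x).exp
  induction n with
  | zero =>
    convert hexp using 1
    · funext y
      simp [poissonProbLT]
    · simp
  | succ n ih =>
    have hterm : HasDerivAt (fun y => y ^ (n + 1) / ((n + 1) ! : ℝ) * exp (-y))
        (x ^ n / (n ! : ℝ) * exp (-x) - x ^ (n + 1) / ((n + 1) ! : ℝ) * exp (-x)) x := by
      refine (((hasDerivAt_pow (n + 1) x).div_const ((n + 1) ! : ℝ)).fun_mul hexp).congr_deriv ?_
      push_cast [factorial_succ, Nat.add_sub_cancel]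
      field_simp
      ring
    rw [show poissonProbLT (n + 2) = fun y => poissonProbLT (n + 1) y + _ from
      funext fun y => poissonProbLT_succ (n + 1) y]
    exact (ih.add hterm).congr_deriv (by ring)

lemma hasDerivAt_S (n : ℕ) (R x : ℝ) :
    HasDerivAt (S (n + 1) R)
      (R * (poissonProbLT (n + 1) x - x * (x ^ n / (n ! : ℝ) * exp (-x)))) x :=
  (((hasDerivAt_id x).const_mul R).mul (hasDerivAt_poissonProbLT n x)).congr_deriv (by simp; ring)

lemma mul_S_succ (M : ℕ) (R x : ℝ) :
    M * S (M + 1) R x = (M + 1) * S M R x - x * deriv (S M R) x := by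
  cases M with
  | zero =>
    have h0 : S 0 R = fun _ => 0 := funext fun y => by simp [S]
    simp [h0]
  | succ n =>
    rw [(hasDerivAt_S n R x).deriv]
    change _ * (R * x * poissonProbLT _ x) = _ * (R * x * poissonProbLT _ x) - _
    rw [poissonProbLT_succ (n + 1)]
    push_cast [factorial_succ]
    field_simp
    ring

lemma continuous_S (M : ℕ) (R : ℝ) : Continuous (S M R) := by
  unfold S
  fun_prop

lemma tendsto_S_atTop (M : ℕ) (R : ℝ) : Tendsto (S M R) atTop (𝓝 0) := by
  have h : Tendsto (fun x => ∑ k ∈ range M, R / (k ! : ℝ) * (x ^ (k + 1) * exp (-x)))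
      atTop (𝓝 (∑ k ∈ range M, R / (k ! : ℝ) * 0)) :=
    tendsto_finsetSum _ fun k _ => (tendsto_pow_mul_exp_neg_atTop_nhds_zero _).const_mul _
  simp only [mul_zero, sum_const_zero] at h
  refine h.congr fun x => ?_
  rw [S, mul_sum]
  exact sum_congr rfl fun k _ => by ring

lemma exists_isMaxOn_S {M : ℕ} (hM : 1 ≤ M) {R : ℝ} (hR : 0 < R) :
    ∃ c ∈ Ioi (0 : ℝ), IsMaxOn (S M R) (Ioi 0) c := by
  have hpos : 0 < S M R 1 := by
    have : 0 < poissonProbLT M 1 :=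
      sum_pos (fun k _ => by positivity) (nonempty_range_iff.2 (by omega))
    change 0 < R * 1 * poissonProbLT M 1
    positivity
  have htail : ∀ᶠ x in cocompact ℝ ⊓ 𝓟 (Ici 0), S M R x ≤ S M R 1 := by
    rw [eventually_inf_principal, cocompact_eq_atBot_atTop, eventually_sup]
    constructor
    · filter_upwards [eventually_lt_atBot 0] with x hx hx0 using absurd hx0 (notMem_Ici.2 hx)
    · filter_upwards [(tendsto_S_atTop M R).eventually_lt_const hpos] with x hx _ using hx.le
  obtain ⟨c, hc, hmax⟩ :=
    (continuous_S M R).continuousOn.exists_isMaxOn' isClosed_Ici (mem_Ici.2 zero_le_one) htail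
  have hc0 : c ≠ 0 := by
    rintro rfl
    have hzero : S M R 0 = 0 := by simp [S]
    exact hpos.not_ge (hzero ▸ isMaxOn_iff.1 hmax 1 (mem_Ici.2 zero_le_one))
  exact ⟨c, lt_of_le_of_ne hc (Ne.symm hc0), hmax.on_subset Ioi_subset_Ici_self⟩

/-- Super-linearity, Theorem 1: `S*(M+1)/(M+1) ≥ S*(M)/M`. -/
theorem stmt4 (M : ℕ) (hM : 1 ≤ M) (R : ℝ) (hR : 0 < R) :
    Sstar M R / (M : ℝ) ≤ Sstar (M + 1) R / ((M : ℝ) + 1) := by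
  obtain ⟨c, hc, hmax⟩ := exists_isMaxOn_S hM hR
  obtain ⟨_, -, hmax'⟩ := exists_isMaxOn_S (M := M + 1) (by omega) hR
  have hSstar : Sstar M R = S M R c := (hmax.isLUB hc).csSup_eq ⟨_, mem_image_of_mem _ hc⟩
  have hcrit : deriv (S M R) c = 0 := (hmax.isLocalMax (Ioi_mem_nhds hc)).deriv_eq_zero
  have hle : S (M + 1) R c ≤ Sstar (M + 1) R := le_csSup hmax'.bddAbove (mem_image_of_mem _ hc)
  have hM0 : (0 : ℝ) < M := by exact_mod_cast hM
  rw [hSstar, div_le_div_iff₀ hM0 (by positivity)]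
  calc S M R c * (M + 1) = M * S (M + 1) R c := by rw [mul_S_succ, hcrit]; ring
    _ ≤ Sstar (M + 1) R * M := by rw [mul_comm]; exact mul_le_mul_of_nonneg_right hle hM0.le
end

section
/- (Super-linearity with finite population, Theorem 3) For all integers 1 ≤ M < N and every real R > 0: (sup_{p∈[0,1]} S_N(M+1,p))/(M+1) ≥ (sup_{p∈[0,1]} S_N(M,p))/M. -/
/-!
Write `t_k(p) = k C(N,k) p^k (1-p)^(N-k)`, so that `S_N(M,p) = R ∑_{k ≤ M} t_k(p)`. Since
`(N-k) C(N,k) = (k+1) C(N,k+1)`, one has `p t_k' = k (t_k - t_{k+1})`, and summation by parts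
gives `p ∂_p S_N(M,p) = S_N(M,p) - M R t_{M+1}(p)`. At an interior maximiser `p₀` of `S_N(M,·)`
the derivative vanishes, so `S_N(M+1,p₀) = S_N(M,p₀) + R t_{M+1}(p₀) = (M+1)/M · S_N(M,p₀)`.
A maximiser at an endpoint has `S_N(M,p₀) = 0` (at `p₀ = 1` because `M < N`), and then
`S_N(M+1,0) = 0` already witnesses the inequality.
-/

open Finset Real

/-- Finite-population throughput of slotted ALOHA with `N` stations, MPR
capability `M`, per-station rate `R` and transmission probability `p`:
`S_N(M,p) = R · ∑_{k=1}^{M} k · C(N,k) · p^k (1−p)^{N−k}`. -/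
noncomputable def SN (N M : ℕ) (R p : ℝ) : ℝ :=
  R * ∑ k ∈ Finset.Icc 1 M, (k : ℝ) * (N.choose k : ℝ) * p ^ k * (1 - p) ^ (N - k)

noncomputable def throughputTerm (N k : ℕ) (p : ℝ) : ℝ :=
  k * N.choose k * p ^ k * (1 - p) ^ (N - k)

theorem SN_eq_sum (N M : ℕ) (R p : ℝ) :
    SN N M R p = R * ∑ k ∈ Icc 1 M, throughputTerm N k p := rfl

theorem SN_succ (N M : ℕ) (R p : ℝ) :
    SN N (M + 1) R p = SN N M R p + R * throughputTerm N (M + 1) p := by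
  rw [SN_eq_sum, SN_eq_sum, sum_Icc_succ_top (by omega), mul_add]

theorem SN_at_zero (N M : ℕ) (R : ℝ) : SN N M R 0 = 0 := by
  rw [SN_eq_sum, sum_eq_zero fun k hk => ?_, mul_zero]
  simp [throughputTerm, zero_pow (by grind : k ≠ 0)]

theorem SN_at_one {N M : ℕ} (hMN : M < N) (R : ℝ) : SN N M R 1 = 0 := by
  rw [SN_eq_sum, sum_eq_zero fun k hk => ?_, mul_zero]
  simp [throughputTerm, zero_pow (by grind : N - k ≠ 0)]

theorem continuous_SN (N M : ℕ) (R : ℝ) : Continuous (SN N M R) := by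
  unfold SN
  fun_prop

theorem sum_Icc_mul_sub_succ {α : Type*} [CommRing α] (t : ℕ → α) (M : ℕ) :
    ∑ k ∈ Icc 1 M, (k : α) * (t k - t (k + 1)) = ∑ k ∈ Icc 1 M, t k - M * t (M + 1) := by
  induction M with
  | zero => simp
  | succ M ih =>
    rw [sum_Icc_succ_top (by omega), ih, sum_Icc_succ_top (by omega)]
    push_cast
    ring

theorem hasDerivAt_throughputTerm (N k : ℕ) (p : ℝ) :
    HasDerivAt (throughputTerm N k)
      (k * N.choose k * (k * p ^ (k - 1) * (1 - p) ^ (N - k)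
        - p ^ k * ((N - k : ℕ) * (1 - p) ^ (N - k - 1)))) p := by
  refine (((hasDerivAt_pow k p).const_mul (k * N.choose k : ℝ)).fun_mul
    (((hasDerivAt_id' p).const_sub 1).fun_pow (N - k))).congr_deriv ?_
  ring

theorem mul_deriv_throughputTerm (N k : ℕ) (p : ℝ) :
    p * deriv (throughputTerm N k) p =
      k * (throughputTerm N k p - throughputTerm N (k + 1) p) := by
  rw [(hasDerivAt_throughputTerm N k p).deriv]
  rcases k with _ | k
  · simp [throughputTerm]
  have hchoose :
      (N.choose (k + 1 + 1) * (k + 1 + 1) : ℝ) = N.choose (k + 1) * (N - (k + 1) : ℕ) := by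
    exact_mod_cast Nat.choose_succ_right_eq N (k + 1)
  have hexp : N - (k + 1) - 1 = N - (k + 1 + 1) := by omega
  simp only [throughputTerm, hexp, Nat.add_sub_cancel]
  push_cast
  linear_combination ((k + 1) * p ^ (k + 2) * (1 - p) ^ (N - (k + 1 + 1)) : ℝ) * hchoose

theorem mul_deriv_SN (N M : ℕ) (R p : ℝ) :
    p * deriv (SN N M R) p = SN N M R p - M * R * throughputTerm N (M + 1) p := by
  have h : HasDerivAt (SN N M R) (R * ∑ k ∈ Icc 1 M, deriv (throughputTerm N k) p) p :=
    (HasDerivAt.fun_sum fun k _ =>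
      (hasDerivAt_throughputTerm N k p).differentiableAt.hasDerivAt).const_mul R
  rw [h.deriv, mul_left_comm, mul_sum, sum_congr rfl fun k _ => mul_deriv_throughputTerm N k p,
    sum_Icc_mul_sub_succ, SN_eq_sum]
  ring

theorem SN_succ_div_eq_of_deriv_eq_zero {N M : ℕ} (hM : M ≠ 0) {R p : ℝ}
    (h : deriv (SN N M R) p = 0) : SN N (M + 1) R p / (M + 1) = SN N M R p / M := by
  have hcrit : SN N M R p = M * R * throughputTerm N (M + 1) p := by
    linarith [mul_deriv_SN N M R p, h ▸ mul_zero p]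
  rw [SN_succ, hcrit]
  field_simp

theorem exists_SN_succ_div_ge_of_isMaxOn {N M : ℕ} (hM : 1 ≤ M) (hMN : M < N) {R p : ℝ}
    (hp : p ∈ Set.Icc 0 1) (hmax : IsMaxOn (SN N M R) (Set.Icc 0 1) p) :
    ∃ q ∈ Set.Icc (0 : ℝ) 1, SN N M R p / M ≤ SN N (M + 1) R q / (M + 1) := by
  rcases Set.eq_endpoints_or_mem_Ioo_of_mem_Icc hp with rfl | rfl | hp'
  · exact ⟨0, Set.left_mem_Icc.2 zero_le_one, by simp [SN_at_zero]⟩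
  · exact ⟨0, Set.left_mem_Icc.2 zero_le_one, by simp [SN_at_zero, SN_at_one hMN]⟩
  · have hcrit := (hmax.isLocalMax (Icc_mem_nhds hp'.1 hp'.2)).deriv_eq_zero
    exact ⟨p, hp, (SN_succ_div_eq_of_deriv_eq_zero (by omega) hcrit).ge⟩

theorem stmt16_general (N M : ℕ) (hM : 1 ≤ M) (hMN : M < N) (R : ℝ) :
    sSup ((fun p => SN N M R p) '' Set.Icc (0 : ℝ) 1) / (M : ℝ) ≤
      sSup ((fun p => SN N (M + 1) R p) '' Set.Icc (0 : ℝ) 1) / ((M : ℝ) + 1) := by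
  obtain ⟨p, hp, hsup, hmax⟩ := isCompact_Icc.exists_sSup_image_eq_and_ge
    (Set.nonempty_Icc.2 zero_le_one) (continuous_SN N M R).continuousOn
  obtain ⟨q, hq, hle⟩ := exists_SN_succ_div_ge_of_isMaxOn hM hMN hp hmax
  rw [hsup]
  exact hle.trans <| div_le_div_of_nonneg_right
    ((continuous_SN N (M + 1) R).continuousOn.le_sSup_image_Icc hq) (by positivity)

/-- Theorem 3, super-linearity with finite population: for
`1 ≤ M < N` and `R > 0`,
`(sup_{p∈[0,1]} S_N(M+1,p))/(M+1) ≥ (sup_{p∈[0,1]} S_N(M,p))/M`. -/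
theorem stmt16 (N M : ℕ) (hM : 1 ≤ M) (hMN : M < N) (R : ℝ) (hR : 0 < R) :
    sSup ((fun p => SN N M R p) '' Set.Icc (0 : ℝ) 1) / (M : ℝ) ≤
      sSup ((fun p => SN N (M + 1) R p) '' Set.Icc (0 : ℝ) 1) / ((M : ℝ) + 1) :=
  stmt16_general N M hM hMN R
end
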